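/- Let A be a bounded linear operator on ℓ²(ℕ), let z ∈ ℂ, let n ∈ ℕ with n ≥ 1, and let f : ℕ → ℕ satisfy f(n) ≥ n + 1. Then |σ_inf((A − zI) ι_n) − σ_inf(P_{f(n)} (A − zI) ι_n)| ≤ ‖(I − P_{f(n)}^* P_{f(n)}) A ι_n‖ = D_{f,n}(A). -/

import Mathlib

/-- `ℓ²(ℕ)`, the Hilbert space of square-summable complex sequences. -/
noncomputable abbrev l2 := lp (fun _ : ℕ => ℂ) 2

/-- Truncation to the first `m` coordinates: the action of `P_m^* P_m` on `ℓ²(ℕ)`. -/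
noncomputable def trunc (m : ℕ) (y : l2) : l2 :=
  ∑ i ∈ Finset.range m, lp.single 2 i (y i)

/-- `x` lies in `span{e_0, …, e_{n-1}}`, i.e. in the range of `ι_n = P_n^*`. -/
def inSpan (n : ℕ) (x : l2) : Prop := ∀ i, n ≤ i → x i = 0

/-- `σ_inf(T ι_n)`: the injection modulus of `T` restricted to `span{e_0, …, e_{n-1}}`. -/
noncomputable def sigmaInfRestr (T : l2 →L[ℂ] l2) (n : ℕ) : ℝ :=
  sInf {r : ℝ | ∃ x : l2, inSpan n x ∧ ‖x‖ = 1 ∧ r = ‖T x‖}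

/-- `σ_inf(P_m T ι_n)`: the injection modulus of `P_m T` restricted to
`span{e_0, …, e_{n-1}}`. -/
noncomputable def sigmaInfTruncRestr (T : l2 →L[ℂ] l2) (m n : ℕ) : ℝ :=
  sInf {r : ℝ | ∃ x : l2, inSpan n x ∧ ‖x‖ = 1 ∧ r = ‖trunc m (T x)‖}

/-- The dispersion `D_{f,n}(A) = ‖(I − P_{f(n)}^* P_{f(n)}) A ι_n‖`. -/
noncomputable def dispersion (f : ℕ → ℕ) (n : ℕ) (A : l2 →L[ℂ] l2) : ℝ :=
  sSup {r : ℝ | ∃ x : l2, inSpan n x ∧ ‖x‖ = 1 ∧ r = ‖A x - trunc (f n) (A x)‖}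

lemma trunc_apply (m : ℕ) (y : l2) (j : ℕ) :
    (trunc m y : ∀ _ : ℕ, ℂ) j = if j < m then y j else 0 := by
  have h : (trunc m y : ∀ _ : ℕ, ℂ) j
      = ∑ i ∈ Finset.range m, (lp.single 2 i (y i) : ∀ _ : ℕ, ℂ) j := by
    rw [trunc, lp.coeFn_sum, Finset.sum_apply]
  rw [h]
  simp only [lp.single_apply]
  by_cases hj : j < m
  · rw [Finset.sum_eq_single j]
    · simp [hj]
    · intro i _ hij; rw [Pi.single_apply, if_neg (Ne.symm hij)]
    · intro hmem; exact absurd (Finset.mem_range.mpr hj) hmem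
  · rw [if_neg hj, Finset.sum_eq_zero]
    intro i hi
    have : j ≠ i := by
      intro rfl_eq; exact hj (rfl_eq ▸ Finset.mem_range.mp hi)
    rw [Pi.single_apply, if_neg this]

lemma trunc_norm_le (m : ℕ) (y : l2) : ‖trunc m y‖ ≤ ‖y‖ := by
  have hp : (0:ℝ) < (2 : ENNReal).toReal := by norm_num
  have h1 : ‖trunc m y‖ ^ (2 : ENNReal).toReal
      = ∑ i ∈ Finset.range m, ‖y i‖ ^ (2 : ENNReal).toReal := by
    rw [trunc]; exact lp.norm_sum_single hp _ _
  have h2 := lp.sum_rpow_le_norm_rpow hp y (Finset.range m)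
  have := h1.trans_le h2
  exact (Real.rpow_le_rpow_iff (norm_nonneg _) (norm_nonneg _) hp).mp this

lemma trunc_eq_self {n m : ℕ} {x : l2} (hx : inSpan n x) (hnm : n ≤ m) :
    trunc m x = x := by
  apply lp.ext
  funext j
  rw [trunc_apply]
  by_cases hj : j < m
  · rw [if_pos hj]
  · rw [if_neg hj]
    exact (hx j (hnm.trans (not_lt.mp hj))).symm

lemma trunc_sub_smul {n m : ℕ} {x : l2} (hx : inSpan n x) (hnm : n ≤ m)
    (y : l2) (z : ℂ) : trunc m (y - z • x) = trunc m y - z • x := by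
  apply lp.ext
  funext j
  have hc : ((trunc m y - z • x : l2) : ∀ _ : ℕ, ℂ) j = (trunc m y : ∀ _ : ℕ, ℂ) j - z * x j := by
    simp [lp.coeFn_sub, lp.coeFn_smul]
    rfl
  rw [trunc_apply, hc, trunc_apply]
  have hs : ((y - z • x : l2) : ∀ _ : ℕ, ℂ) j = y j - z * x j := by
    simp [lp.coeFn_sub, lp.coeFn_smul]
    rfl
  rw [hs]
  by_cases hj : j < m
  · simp [hj]
  · rw [if_neg hj, if_neg hj]
    rw [hx j (hnm.trans (not_lt.mp hj))]
    ring

theorem stmt13 (A : l2 →L[ℂ] l2) (z : ℂ) (n : ℕ) (hn : 1 ≤ n)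
    (f : ℕ → ℕ) (hf : n + 1 ≤ f n) :
    |sigmaInfRestr (A - z • 1) n - sigmaInfTruncRestr (A - z • 1) (f n) n| ≤
      dispersion f n A := by
  set m := f n with hm
  have hnm : n ≤ m := le_trans (Nat.le_succ n) hf
  set T : l2 →L[ℂ] l2 := A - z • 1 with hT
  set S1 : Set ℝ := {r : ℝ | ∃ x : l2, inSpan n x ∧ ‖x‖ = 1 ∧ r = ‖T x‖} with hS1
  set S2 : Set ℝ := {r : ℝ | ∃ x : l2, inSpan n x ∧ ‖x‖ = 1 ∧ r = ‖trunc m (T x)‖} with hS2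
  set SD : Set ℝ := {r : ℝ | ∃ x : l2, inSpan n x ∧ ‖x‖ = 1 ∧ r = ‖A x - trunc m (A x)‖}
    with hSD
  -- the distinguished unit vector e_0
  have hx0span : inSpan n (lp.single 2 0 (1:ℂ)) := by
    intro i hi
    have : i ≠ 0 := by omega
    exact lp.single_apply_ne 2 0 _ this
  have hx0norm : ‖(lp.single 2 0 (1:ℂ) : l2)‖ = 1 := by
    have h := lp.norm_single (p := 2) (E := fun _ : ℕ => ℂ) (by norm_num) 0 (1:ℂ)
    exact h.trans norm_one
  have hS1ne : S1.Nonempty := ⟨_, lp.single 2 0 (1:ℂ), hx0span, hx0norm, rfl⟩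
  have hS2ne : S2.Nonempty := ⟨_, lp.single 2 0 (1:ℂ), hx0span, hx0norm, rfl⟩
  have hS1bd : BddBelow S1 := ⟨0, by rintro r ⟨x, _, _, rfl⟩; exact norm_nonneg _⟩
  have hS2bd : BddBelow S2 := ⟨0, by rintro r ⟨x, _, _, rfl⟩; exact norm_nonneg _⟩
  have hSDbd : BddAbove SD := by
    refine ⟨2 * ‖A‖, ?_⟩
    rintro r ⟨x, _, hx1, rfl⟩
    have h1 : ‖A x‖ ≤ ‖A‖ := by
      have h0 := A.le_opNorm x
      rw [hx1, mul_one] at h0; exact h0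
    have h2 : ‖trunc m (A x)‖ ≤ ‖A x‖ := trunc_norm_le m (A x)
    calc ‖A x - trunc m (A x)‖ ≤ ‖A x‖ + ‖trunc m (A x)‖ := norm_sub_le _ _
      _ ≤ 2 * ‖A‖ := by linarith
  -- pointwise key estimate
  have key : ∀ x : l2, inSpan n x → ‖x‖ = 1 →
      |‖T x‖ - ‖trunc m (T x)‖| ≤ ‖A x - trunc m (A x)‖ := by
    intro x hxs hx1
    have hTx : T x = A x - z • x := rfl
    have habs := abs_norm_sub_norm_le (T x) (trunc m (T x))
    have hdiff : T x - trunc m (T x) = A x - trunc m (A x) := by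
      rw [hTx, trunc_sub_smul hxs hnm (A x) z]; abel
    rw [hdiff] at habs
    exact habs
  have hmem : ∀ x : l2, inSpan n x → ‖x‖ = 1 →
      ‖A x - trunc m (A x)‖ ≤ dispersion f n A := by
    intro x hxs hx1
    exact le_csSup hSDbd ⟨x, hxs, hx1, rfl⟩
  have h1 : sigmaInfRestr T n - dispersion f n A ≤ sigmaInfTruncRestr T m n := by
    refine le_csInf hS2ne ?_
    rintro r ⟨x, hxs, hx1, rfl⟩
    have hle : sigmaInfRestr T n ≤ ‖T x‖ := csInf_le hS1bd ⟨x, hxs, hx1, rfl⟩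
    have hk := key x hxs hx1
    have hd := hmem x hxs hx1
    have := abs_le.mp hk
    linarith [this.1, this.2]
  have h2 : sigmaInfTruncRestr T m n - dispersion f n A ≤ sigmaInfRestr T n := by
    refine le_csInf hS1ne ?_
    rintro r ⟨x, hxs, hx1, rfl⟩
    have hle : sigmaInfTruncRestr T m n ≤ ‖trunc m (T x)‖ :=
      csInf_le hS2bd ⟨x, hxs, hx1, rfl⟩
    have hk := key x hxs hx1
    have hd := hmem x hxs hx1
    have := abs_le.mp hk
    linarith [this.1, this.2]
  rw [abs_le]
  constructor <;> [linarith; linarith]
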